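/- Let a_1,…,a_n and b_1,…,b_n be positive real numbers with a_1 > max{b_1, b_2, …, b_n}. Then the function x ↦ ∏_{i=1}^n sinh(a_i·x)/sinh(b_i·x) (extended by continuity at x = 0) is not positive definite. -/

import Mathlib

/-!
A positive definite function that extends holomorphically to a strip `|Im z| < R` has
`(-1)^k F^(2k)(0) ≥ 0` for every `k`: positive definiteness survives symmetric second differences
and pointwise limits, hence passes to `-F''`. Summing the Taylor series at `0` at `± i y` then gives
`F(iy) + F(-iy) ≥ 2 F(0)`. The product `∏ sinh(a_i z) / sinh(b_i z)` is holomorphic on the strip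
`|Im z| < π / max b`, is positive at `0`, and vanishes at `± iπ / a_0`, which lies inside that strip
exactly because `a_0 > max b`.
-/

open scoped ComplexOrder

/-- A function `φ : ℝ → ℂ` is positive definite if for every `n`, all real numbers
`x 1, …, x n` and complex numbers `c 1, …, c n`, the sum
`∑ i j, c i * conj (c j) * φ (x i - x j)` is a nonnegative real number. -/
def IsPosDefFun (φ : ℝ → ℂ) : Prop :=
  ∀ (n : ℕ) (x : Fin n → ℝ) (c : Fin n → ℂ),
    0 ≤ ∑ i, ∑ j, c i * (starRingEnd ℂ) (c j) * φ (x i - x j)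


/-- The function `x ↦ ∏ i, sinh (a i * x) / sinh (b i * x)`, extended by continuity
at `x = 0` (where it takes the value `∏ i, a i / b i`). -/
noncomputable def sinhProd {n : ℕ} (a b : Fin n → ℝ) (x : ℝ) : ℝ :=
  if x = 0 then ∏ i, a i / b i else ∏ i, Real.sinh (a i * x) / Real.sinh (b i * x)

open Filter Topology Asymptotics Complex

namespace IsPosDefFun

variable {φ : ℝ → ℂ}

lemma apply_zero_nonneg (hφ : IsPosDefFun φ) : 0 ≤ φ 0 := by
  simpa using hφ 1 (fun _ => 0) (fun _ => 1)

lemma mul_const (hφ : IsPosDefFun φ) {c : ℂ} (hc : 0 ≤ c) : IsPosDefFun fun x => φ x * c := by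
  intro n x v
  simpa only [Finset.sum_mul, mul_assoc] using mul_nonneg (hφ n x v) hc

lemma second_difference (hφ : IsPosDefFun φ) (h : ℝ) :
    IsPosDefFun fun x => 2 * φ x - φ (x + h) - φ (x - h) := by
  intro n x c
  have key := hφ (n + n) (Fin.addCases x fun i => x i + h) (Fin.addCases c fun i => -c i)
  simp only [Fin.sum_univ_add, Fin.addCases_left, Fin.addCases_right, map_neg, mul_neg, neg_mul,
    neg_neg, add_sub_add_right_eq_sub, ← Finset.sum_add_distrib] at key
  refine key.trans_eq (Finset.sum_congr rfl fun i _ => Finset.sum_congr rfl fun j _ => ?_)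
  ring_nf

lemma of_tendsto {ι : Type*} {l : Filter ι} [l.NeBot] {Φ : ι → ℝ → ℂ} {ψ : ℝ → ℂ}
    (hΦ : ∀ᶠ i in l, IsPosDefFun (Φ i)) (hψ : ∀ x, Tendsto (fun i => Φ i x) l (𝓝 (ψ x))) :
    IsPosDefFun ψ := fun n x c =>
  ge_of_tendsto (tendsto_finsetSum _ fun _ _ => tendsto_finsetSum _ fun _ _ =>
    (hψ _).const_mul _) (hΦ.mono fun _ hi => hi n x c)

end IsPosDefFun

lemma AnalyticAt.isBigO_sub_taylor_two {H : ℂ → ℂ} {z : ℂ} (hH : AnalyticAt ℂ H z) :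
    (fun y => H (z + y) - (H z + y * deriv H z + y ^ 2 * (iteratedDeriv 2 H z / 2)))
      =O[𝓝 0] fun y => y ^ 3 := by
  have := hH.hasFPowerSeriesAt.isBigO_sub_partialSum_pow 3
  simp only [← norm_pow, isBigO_norm_right] at this
  simpa [FormalMultilinearSeries.partialSum, Finset.sum_range_succ] using this

lemma AnalyticAt.tendsto_second_difference {H : ℂ → ℂ} {z : ℂ} (hH : AnalyticAt ℂ H z) :
    Tendsto (fun y => (2 * H z - H (z + y) - H (z - y)) / y ^ 2) (𝓝[≠] 0)
      (𝓝 (-iteratedDeriv 2 H z)) := by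
  set R := fun y => H (z + y) - (H z + y * deriv H z + y ^ 2 * (iteratedDeriv 2 H z / 2))
  have hR₀ : R =O[𝓝 0] fun y => y ^ 3 := hH.isBigO_sub_taylor_two
  have hR : (fun y => R y + R (-y)) =O[𝓝 0] fun y => y ^ 3 :=
    hR₀.add <| by
      simpa [Function.comp_def, Odd.neg_pow (by decide : Odd 3)] using
        hR₀.comp_tendsto (continuous_neg.tendsto' (0 : ℂ) 0 neg_zero)
  have hquot : Tendsto (fun y => (R y + R (-y)) / y ^ 2) (𝓝[≠] 0) (𝓝 0) := by
    have h := (hR.mono nhdsWithin_le_nhds).mul (isBigO_refl (fun y : ℂ => (y ^ 2)⁻¹) (𝓝[≠] 0))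
    refine (h.congr' (.of_forall fun y => (div_eq_mul_inv _ _).symm) ?_).trans_tendsto
      (tendsto_nhdsWithin_of_tendsto_nhds tendsto_id)
    filter_upwards [self_mem_nhdsWithin] with y (hy : y ≠ 0)
    field_simp
    rfl
  refine (hquot.neg.const_add (-iteratedDeriv 2 H z)).congr' ?_ |>.trans (by simp)
  filter_upwards [self_mem_nhdsWithin] with y (hy : y ≠ 0)
  simp only [R, ← sub_eq_add_neg]
  field_simp
  ring

namespace IsPosDefFun

variable {H : ℂ → ℂ}

lemma neg_iteratedDeriv_two (hH : ∀ x : ℝ, AnalyticAt ℂ H x) (h : IsPosDefFun fun x : ℝ => H x) :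
    IsPosDefFun fun x : ℝ => -iteratedDeriv 2 H x := by
  have hquot (t : ℝ) :
      IsPosDefFun fun x : ℝ => (2 * H x - H (x + t) - H (x - t)) / (t : ℂ) ^ 2 := by
    have ht : (0 : ℂ) ≤ ((t : ℂ) ^ 2)⁻¹ := by
      rw [← ofReal_pow, ← ofReal_inv, zero_le_real]
      positivity
    simpa only [div_eq_mul_inv, ofReal_add, ofReal_sub] using (h.second_difference t).mul_const ht
  have hofReal : Tendsto (fun t : ℝ => (t : ℂ)) (𝓝[≠] 0) (𝓝[≠] 0) :=
    tendsto_nhdsWithin_of_tendsto_nhds_of_eventually_within _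
      ((continuous_ofReal.tendsto' 0 0 ofReal_zero).mono_left nhdsWithin_le_nhds)
      (eventually_nhdsWithin_of_forall fun t ht => ofReal_ne_zero.mpr ht)
  exact of_tendsto (.of_forall hquot) fun x => (hH x).tendsto_second_difference.comp hofReal

lemma neg_one_pow_mul_iteratedDeriv (hH : AnalyticOnNhd ℂ H (Set.range ((↑) : ℝ → ℂ)))
    (h : IsPosDefFun fun x : ℝ => H x) (k : ℕ) :
    IsPosDefFun fun x : ℝ => (-1) ^ k * iteratedDeriv (2 * k) H x := by
  induction k with
  | zero => simpa using h
  | succ k ih =>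
    have hk : AnalyticOnNhd ℂ (fun z => (-1) ^ k * iteratedDeriv (2 * k) H z)
        (Set.range ((↑) : ℝ → ℂ)) := by
      rw [iteratedDeriv_eq_iterate]
      exact analyticOnNhd_const.mul (hH.iterated_deriv _)
    convert ih.neg_iteratedDeriv_two fun x => hk _ (Set.mem_range_self x) using 2 with x
    rw [iteratedDeriv_const_mul_field, iteratedDeriv_eq_iterate, iteratedDeriv_eq_iterate,
      iteratedDeriv_eq_iterate, ← Function.iterate_add_apply]
    ring_nf

end IsPosDefFun

theorem IsPosDefFun.two_mul_le_add_apply_mul_I {F : ℂ → ℂ} {R y : ℝ}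
    (hF : DifferentiableOn ℂ F {z | |z.im| < R}) (h : IsPosDefFun fun x : ℝ => F x)
    (hy : |y| < R) : 2 * F 0 ≤ F (y * I) + F (-(y * I)) := by
  have hR : 0 < R := (abs_nonneg y).trans_lt hy
  have hball : Metric.ball (0 : ℂ) R ⊆ {z | |z.im| < R} := fun z hz =>
    (abs_im_le_norm z).trans_lt (mem_ball_zero_iff.mp hz)
  have hcoeff (k : ℕ) : 0 ≤ (-1) ^ k * iteratedDeriv (2 * k) F 0 := by
    have hA : AnalyticOnNhd ℂ F (Set.range ((↑) : ℝ → ℂ)) :=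
      (hF.analyticOnNhd (isOpen_lt (continuous_abs.comp continuous_im) continuous_const)).mono
        (by rintro _ ⟨x, rfl⟩; simpa using hR)
    simpa using (h.neg_one_pow_mul_iteratedDeriv hA k).apply_zero_nonneg
  have hmem (z : ℂ) (hz : ‖z‖ = |y|) : z ∈ Metric.ball (0 : ℂ) R := by
    rwa [mem_ball_zero_iff, hz]
  have hsum := (hasSum_taylorSeries_on_ball (hF.mono hball) (hmem (y * I) (by simp))).add
    (hasSum_taylorSeries_on_ball (hF.mono hball) (hmem (-(y * I)) (by simp)))
  have hterm (m : ℕ) (_ : m ≠ 0) :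
      0 ≤ (m.factorial : ℂ)⁻¹ • (y * I - 0) ^ m • iteratedDeriv m F 0 +
        (m.factorial : ℂ)⁻¹ • (-(y * I) - 0) ^ m • iteratedDeriv m F 0 := by
    rcases Nat.even_or_odd' m with ⟨k, rfl | rfl⟩
    · have hpow : (y * I) ^ (2 * k) = (y ^ (2 * k) : ℝ) * (-1) ^ k := by
        rw [mul_pow, pow_mul I, I_sq]
        push_cast
        ring
      have heq : ((2 * k).factorial : ℂ)⁻¹ * ((y * I) ^ (2 * k) * iteratedDeriv (2 * k) F 0) +
          ((2 * k).factorial : ℂ)⁻¹ * ((y * I) ^ (2 * k) * iteratedDeriv (2 * k) F 0) =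
          ((2 * y ^ (2 * k) / (2 * k).factorial : ℝ) : ℂ) *
            ((-1) ^ k * iteratedDeriv (2 * k) F 0) := by
        rw [hpow]
        push_cast
        ring
      simp only [sub_zero, smul_eq_mul, Even.neg_pow (even_two_mul k), heq]
      have hy2k := (even_two_mul k).pow_nonneg y
      exact mul_nonneg (zero_le_real.mpr (by positivity)) (hcoeff k)
    · simp [Odd.neg_pow (odd_two_mul_add_one k)]
  simpa [two_mul] using le_hasSum hsum 0 hterm

lemma Complex.differentiable_dslope_sinh : Differentiable ℂ (dslope sinh 0) :=
  differentiableOn_univ.mp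
    ((differentiableOn_dslope Filter.univ_mem).mpr differentiable_sinh.differentiableOn)

lemma Complex.dslope_sinh_of_ne_zero {z : ℂ} (hz : z ≠ 0) : dslope sinh 0 z = sinh z / z := by
  rw [dslope_of_ne _ hz, slope_def_field, sinh_zero, sub_zero, sub_zero]

lemma Complex.dslope_sinh_ne_zero {z : ℂ} (hz : |z.im| < Real.pi) : dslope sinh 0 z ≠ 0 := by
  rcases eq_or_ne z 0 with rfl | hz0
  · simp
  rw [dslope_sinh_of_ne_zero hz0, div_ne_zero_iff, and_iff_left hz0]
  intro hs
  obtain ⟨k, hk⟩ := sin_eq_zero_iff.mp (by rw [sin_mul_I, hs, zero_mul] : sin (z * I) = 0)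
  have hre := congrArg re hk
  have him := congrArg im hk
  simp only [mul_re, I_re, mul_zero, I_im, mul_one, zero_sub, intCast_re, ofReal_re, intCast_im,
    ofReal_im, sub_zero, mul_im, add_zero, zero_mul] at hre him
  have hk0 : k = 0 := by
    have hkπ : |(k : ℝ)| * Real.pi < Real.pi := by
      rwa [← abs_of_pos Real.pi_pos, ← abs_mul, ← hre, abs_neg, abs_of_pos Real.pi_pos]
    exact Int.abs_lt_one_iff.mp (by exact_mod_cast (mul_lt_iff_lt_one_left Real.pi_pos).mp hkπ)
  simp only [hk0, Int.cast_zero, zero_mul, neg_eq_zero] at hre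
  exact hz0 (Complex.ext him hre)

lemma Complex.dslope_sinh_int_mul_pi_mul_I {k : ℤ} (hk : k ≠ 0) :
    dslope sinh 0 (k * Real.pi * I) = 0 := by
  rw [dslope_sinh_of_ne_zero (by simp [hk, Real.pi_ne_zero]), sinh_mul_I, sin_int_mul_pi,
    zero_mul, zero_div]

/-- `sinh (a z) / sinh (b z) = a S(a z) / (b S(b z))` with `S w = sinh w / w`; taking
`S = dslope sinh 0` removes the singularity at `0`. -/
noncomputable def complexSinhProd {n : ℕ} (a b : Fin n → ℝ) (z : ℂ) : ℂ :=
  ∏ i, a i * dslope sinh 0 (a i * z) / (b i * dslope sinh 0 (b i * z))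

section complexSinhProd

variable {n : ℕ} {a b : Fin n → ℝ}

lemma complexSinhProd_ofReal (hb : ∀ i, b i ≠ 0) (x : ℝ) :
    complexSinhProd a b x = sinhProd a b x := by
  rcases eq_or_ne x 0 with rfl | hx
  · simp [complexSinhProd, sinhProd]
  simp only [complexSinhProd, sinhProd, if_neg hx, ofReal_prod, ofReal_div, ofReal_sinh,
    ofReal_mul]
  refine Finset.prod_congr rfl fun i _ => ?_
  rcases eq_or_ne (a i) 0 with ha | ha
  · simp [ha]
  rw [dslope_sinh_of_ne_zero (by simp [ha, hx]), dslope_sinh_of_ne_zero (by simp [hb i, hx]),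
    mul_div_assoc', mul_div_assoc', mul_div_mul_left _ _ (ofReal_ne_zero.mpr ha),
    mul_div_mul_left _ _ (ofReal_ne_zero.mpr (hb i)),
    div_div_div_cancel_right₀ (ofReal_ne_zero.mpr hx)]

lemma differentiableOn_complexSinhProd {R : ℝ} (hbR : ∀ i, |b i| * R ≤ Real.pi) :
    DifferentiableOn ℂ (complexSinhProd a b) {z | |z.im| < R} := by
  intro z (hz : |z.im| < R)
  refine (DifferentiableAt.fun_finsetProd fun i _ => ?_).differentiableWithinAt
  rcases eq_or_ne (b i) 0 with hb | hb
  · simp only [hb, ofReal_zero, zero_mul, div_zero]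
    exact differentiableAt_const _
  have hS (c : ℝ) : DifferentiableAt ℂ (fun w => c * dslope sinh 0 (c * w)) z :=
    (differentiable_dslope_sinh.comp (differentiable_id.const_mul _)).const_mul _ z
  refine (hS (a i)).div (hS (b i)) (mul_ne_zero (ofReal_ne_zero.mpr hb) (dslope_sinh_ne_zero ?_))
  calc |(b i * z).im| = |b i| * |z.im| := by simp [abs_mul]
    _ < |b i| * R := by gcongr
    _ ≤ Real.pi := hbR i

lemma complexSinhProd_eq_zero {i : Fin n} {k : ℤ} (hk : k ≠ 0) {z : ℂ}
    (h : a i * z = k * Real.pi * I) : complexSinhProd a b z = 0 :=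
  Finset.prod_eq_zero (Finset.mem_univ i) (by rw [h, dslope_sinh_int_mul_pi_mul_I hk]; simp)

end complexSinhProd

theorem sinhProd_not_posdef_of_max_lt {n : ℕ} (a b : Fin (n + 1) → ℝ)
    (ha : ∀ i, 0 < a i) (hb : ∀ i, 0 < b i)
    (hmax : ∀ i, b i < a 0) :
    ¬ IsPosDefFun fun x => ((sinhProd a b x : ℝ) : ℂ) := by
  intro hpd
  set M := Finset.univ.sup' Finset.univ_nonempty b
  have hbM (i) : b i ≤ M := Finset.le_sup' b (Finset.mem_univ i)
  have hM : 0 < M := (hb 0).trans_le (hbM 0)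
  have hF := differentiableOn_complexSinhProd (a := a) (R := Real.pi / M) fun i => by
    rw [abs_of_pos (hb i), mul_div_assoc', div_le_iff₀ hM, mul_comm]
    exact mul_le_mul_of_nonneg_left (hbM i) Real.pi_pos.le
  have hofReal := complexSinhProd_ofReal (a := a) fun i => (hb i).ne'
  have hy : |Real.pi / a 0| < Real.pi / M := by
    rw [abs_of_pos (div_pos Real.pi_pos (ha 0))]
    exact div_lt_div_of_pos_left Real.pi_pos hM ((Finset.sup'_lt_iff _).mpr fun i _ => hmax i)
  have key := IsPosDefFun.two_mul_le_add_apply_mul_I hF (by simpa only [hofReal] using hpd) hy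
  have hzero (k : ℤ) (hk : k ≠ 0) : complexSinhProd a b (k * ((Real.pi / a 0 : ℝ) * I)) = 0 :=
    complexSinhProd_eq_zero (i := 0) hk (by push_cast; field_simp [ofReal_ne_zero.mpr (ha 0).ne'])
  have h0 : complexSinhProd a b 0 = (∏ i, a i / b i : ℝ) := by simpa [sinhProd] using hofReal 0
  have h₁ := hzero 1 one_ne_zero
  have h₂ := hzero (-1) (by norm_num)
  simp only [Int.cast_one, one_mul, Int.cast_neg, neg_one_mul] at h₁ h₂
  rw [h0, h₁, h₂, add_zero] at key
  have hprod : 0 < ∏ i, a i / b i := Finset.prod_pos fun i _ => div_pos (ha i) (hb i)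
  exact_mod_cast key.not_gt (by positivity)
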